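/- For all non-negative integers m and n with 0 ≤ m ≤ 2^n - 1, the integers a(m) and a(2^n - m) are coprime, where a is Stern's diatomic sequence. -/
import Mathlib

/-- Stern's diatomic sequence: a(0)=0, a(1)=1, a(2m)=a(m), a(2m+1)=a(m)+a(m+1). -/
def stern : ℕ → ℕ
  | 0 => 0
  | 1 => 1
  | n + 2 =>
    if _h : n % 2 = 0 then stern (n / 2 + 1)
    else stern (n / 2 + 1) + stern (n / 2 + 2)
decreasing_by
  · omega
  · omega
  · omega

lemma stern_two_mul : ∀ k, stern (2 * k) = stern k
  | 0 => rfl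
  | k + 1 => by
    show stern (2 * k + 2) = stern (k + 1)
    rw [stern]
    simp [Nat.mul_mod_right, Nat.mul_div_cancel_left]

lemma stern_two_mul_add_one : ∀ k, stern (2 * k + 1) = stern k + stern (k + 1)
  | 0 => by simp [stern]
  | k + 1 => by
    show stern (2 * k + 1 + 2) = stern (k + 1) + stern (k + 2)
    rw [stern]
    have h1 : (2 * k + 1) % 2 = 1 := by omega
    have h2 : (2 * k + 1) / 2 = k := by omega
    simp [h1, h2]

lemma stern_det : ∀ n : ℕ, ∀ m, m + 1 ≤ 2 ^ n →
    stern (m + 1) * stern (2 ^ n - m) = stern m * stern (2 ^ n - m - 1) + 1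
  | 0, m, hm => by
    have : m = 0 := by omega
    subst this
    simp [stern]
  | n + 1, m, hm => by
    have hpow : (2 : ℕ) ^ (n + 1) = 2 * 2 ^ n := by ring
    rcases Nat.even_or_odd m with ⟨k, hk⟩ | ⟨k, hk⟩
    · -- m = 2k
      have hk1 : k + 1 ≤ 2 ^ n := by omega
      have ih := stern_det n k hk1
      have e1 : 2 ^ (n + 1) - m = 2 * (2 ^ n - k) := by omega
      have e2 : 2 * (2 ^ n - k) - 1 = 2 * (2 ^ n - k - 1) + 1 := by omega
      have e3 : m + 1 = 2 * k + 1 := by omega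
      have e4 : 2 ^ n - k - 1 + 1 = 2 ^ n - k := by omega
      have hk' : m = 2 * k := by omega
      rw [e1, e2, e3, hk', stern_two_mul, stern_two_mul, stern_two_mul_add_one,
        stern_two_mul_add_one, e4]
      nlinarith [ih]
    · -- m = 2k + 1
      have hk1 : k + 1 ≤ 2 ^ n := by omega
      have ih := stern_det n k hk1
      have e1 : 2 ^ (n + 1) - m = 2 * (2 ^ n - k - 1) + 1 := by omega
      have e2 : 2 * (2 ^ n - k - 1) + 1 - 1 = 2 * (2 ^ n - k - 1) := by omega
      have e3 : m + 1 = 2 * (k + 1) := by omega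
      have e4 : 2 ^ n - k - 1 + 1 = 2 ^ n - k := by omega
      rw [e1, e2, e3, hk, stern_two_mul, stern_two_mul, stern_two_mul_add_one,
        stern_two_mul_add_one, e4]
      nlinarith [ih]

theorem stern_coprime_conj (m n : ℕ) (h : m ≤ 2 ^ n - 1) :
    Nat.Coprime (stern m) (stern (2 ^ n - m)) := by
  have hpow : 1 ≤ 2 ^ n := Nat.one_le_two_pow
  have hm : m + 1 ≤ 2 ^ n := by omega
  have hd := stern_det n m hm
  have h1 : Nat.gcd (stern m) (stern (2 ^ n - m)) ∣ stern m * stern (2 ^ n - m - 1) :=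
    Dvd.dvd.mul_right (Nat.gcd_dvd_left _ _) _
  have h2 : Nat.gcd (stern m) (stern (2 ^ n - m)) ∣ stern (m + 1) * stern (2 ^ n - m) :=
    Dvd.dvd.mul_left (Nat.gcd_dvd_right _ _) _
  have h3 : Nat.gcd (stern m) (stern (2 ^ n - m)) ∣ 1 := by
    have := Nat.dvd_sub h2 h1
    rwa [hd, Nat.add_sub_cancel_left] at this
  exact Nat.eq_one_of_dvd_one h3
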